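/- If G ∈ QT_3, then γ_t(G) ≤ a(G) + 1. -/

import Mathlib

open SimpleGraph

/-- The total domination number of a graph. -/
noncomputable def totalDominationNumber {V : Type*} (G : SimpleGraph V) : ℕ :=
  sInf {k | ∃ D : Finset V, (∀ v : V, ∃ u ∈ D, G.Adj v u) ∧ D.card = k}

/-- The annihilation number of a graph. -/
noncomputable def annihilationNumber {V : Type*} (G : SimpleGraph V) : ℕ :=
  sSup {k | ∃ S : Finset V, S.card = k ∧ ∑ v ∈ S, (G.neighborSet v).ncard ≤ G.edgeSet.ncard}

/-- Statuses used in the definition of the family `Γ`. -/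
inductive Status
  | A | B | C

/-- A graph whose vertices are labeled with statuses. -/
structure LGraph where
  V : Type
  G : SimpleGraph V
  sta : V → Status

/-- Status-preserving isomorphism of labeled graphs. -/
def LIso (L₁ L₂ : LGraph) : Prop :=
  ∃ e : L₁.G ≃g L₂.G, ∀ v, L₂.sta (e v) = L₁.sta v

/-- The base labeled tree `T₀`: a path `P₆` whose two leaves have status `C`,
whose two support vertices have status `A`, and whose middle vertices have status `B`. -/
def baseT0 : LGraph where
  V := Fin 6
  G := SimpleGraph.fromRel (fun i j => (i : ℕ) + 1 = (j : ℕ))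
  sta := ![Status.C, Status.A, Status.B, Status.B, Status.A, Status.C]

/-- Operation `o₁`: to a labeled graph `L` with chosen vertex `y`, attach a new path
`x–w–v–z` (the vertices `Sum.inr 0, 1, 2, 3`) together with the edge `x y`, statuses
`sta x = sta w = B`, `sta v = A`, `sta z = C`. -/
def o1Ext (L : LGraph) (y : L.V) : LGraph where
  V := L.V ⊕ Fin 4
  G := (L.G.map Function.Embedding.inl) ⊔
    SimpleGraph.fromEdgeSet
      {s(Sum.inl y, Sum.inr 0), s(Sum.inr 0, Sum.inr 1),
       s(Sum.inr 1, Sum.inr 2), s(Sum.inr 2, Sum.inr 3)}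
  sta := Sum.elim L.sta ![Status.B, Status.B, Status.A, Status.C]

/-- Operation `o₂`: to a labeled graph `L` with chosen vertex `y`, attach a new path
`x–w–v` (the vertices `Sum.inr 0, 1, 2`) together with the edge `x y`, statuses
`sta x = B`, `sta w = A`, `sta v = C`. -/
def o2Ext (L : LGraph) (y : L.V) : LGraph where
  V := L.V ⊕ Fin 3
  G := (L.G.map Function.Embedding.inl) ⊔
    SimpleGraph.fromEdgeSet
      {s(Sum.inl y, Sum.inr 0), s(Sum.inr 0, Sum.inr 1), s(Sum.inr 1, Sum.inr 2)}
  sta := Sum.elim L.sta ![Status.B, Status.A, Status.C]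

/-- The family `Γ` of labeled trees (closed under status-preserving isomorphism):
it contains `T₀` and is closed under operation `o₁` (applied at a leaf of status `C`)
and operation `o₂` (applied at a vertex of status `B`). -/
inductive InGamma : LGraph → Prop
  | base (L : LGraph) : LIso baseT0 L → InGamma L
  | op1 (L : LGraph) (y : L.V) (hL : InGamma L) (hsta : L.sta y = Status.C)
      (hleaf : (L.G.neighborSet y).ncard = 1) (L' : LGraph) (h : LIso (o1Ext L y) L') :
      InGamma L'
  | op2 (L : LGraph) (y : L.V) (hL : InGamma L) (hsta : L.sta y = Status.B)
      (L' : LGraph) (h : LIso (o2Ext L y) L') : InGamma L'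

/-- Add one new vertex `h = Sum.inr ()` to `G` and join it to every vertex in `S`. -/
def attachVertex {V : Type} (G : SimpleGraph V) (S : Set V) : SimpleGraph (V ⊕ Unit) :=
  (G.map Function.Embedding.inl) ⊔
    SimpleGraph.fromEdgeSet {e | ∃ u ∈ S, e = s(Sum.inl u, Sum.inr ())}

/-!
Every tree of `Γ` carries a `GammaCertificate`: a total dominating set `D` and a set `S` of
vertices of status other than `B` with `|D| = |S| + 1` and `∑_{v ∈ S} deg v < m`. The path `T₀`
has one, and it survives `o₁` (add `w, v` to `D` and `v, z` to `S`) and `o₂` (add `x, w` to `D`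
and `w, v` to `S`), because the degree sum of `S` grows by at most the number of new edges: under
`o₁` the new members of `S` have total degree `3` and `y` gains one neighbour, against `4` new
edges; under `o₂` they have total degree `3` against `3` new edges, and `y`, of status `B`, is
not in `S`.

For `G ∈ QT₃` built on `o₁(T)`, extend the certificate `(D, S)` of `T`: if `h` sees `w` or `v`,
take `D ∪ {w, v}` and `S ∪ {z, h}`; otherwise `h` sees exactly `x` and `z`, and we take
`D ∪ {x, w, v}` and `S ∪ {w, z, h}`. In both cases the new `S` has degree sum at most `m(G)` and
is one smaller than the new `D`, so `γₜ(G) ≤ |D| ≤ a(G) + 1`.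
-/

open SimpleGraph
open scoped Finset

section Domination

variable {V W : Type*}

def IsTotalDominating (G : SimpleGraph V) (D : Finset V) : Prop :=
  ∀ v, ∃ u ∈ D, G.Adj v u

theorem totalDominationNumber_le_card {G : SimpleGraph V} {D : Finset V}
    (hD : IsTotalDominating G D) : totalDominationNumber G ≤ D.card :=
  Nat.sInf_le ⟨D, hD, rfl⟩

theorem card_le_annihilationNumber [Finite V] {G : SimpleGraph V} {S : Finset V}
    (hS : ∑ v ∈ S, (G.neighborSet v).ncard ≤ G.edgeSet.ncard) :
    S.card ≤ annihilationNumber G := by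
  refine le_csSup ⟨Nat.card V, ?_⟩ ⟨S, rfl, hS⟩
  rintro _ ⟨T, rfl, -⟩
  simpa using Set.ncard_le_card (T : Set V)

theorem IsTotalDominating.map_iso {G : SimpleGraph V} {H : SimpleGraph W} {D : Finset V}
    (hD : IsTotalDominating G D) (e : G ≃g H) :
    IsTotalDominating H (D.map e.toEquiv.toEmbedding) := by
  intro v
  obtain ⟨u, hu, huv⟩ := hD (e.symm v)
  exact ⟨e u, Finset.mem_map_of_mem _ hu, by simpa using e.map_adj_iff.mpr huv⟩

end Domination

theorem SimpleGraph.Iso.ncard_neighborSet {V W : Type*} {G : SimpleGraph V} {H : SimpleGraph W}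
    (e : G ≃g H) (v : V) : (H.neighborSet (e v)).ncard = (G.neighborSet v).ncard := by
  rw [← Nat.card_coe_set_eq, ← Nat.card_coe_set_eq]
  exact Nat.card_congr (e.mapNeighborSet v).symm

theorem SimpleGraph.Iso.ncard_edgeSet {V W : Type*} {G : SimpleGraph V} {H : SimpleGraph W}
    (e : G ≃g H) : H.edgeSet.ncard = G.edgeSet.ncard := by
  rw [← Nat.card_coe_set_eq, ← Nat.card_coe_set_eq]
  exact Nat.card_congr e.mapEdgeSet.symm

theorem Finset.sum_le_sum_add_card_filter {ι : Type*} {s : Finset ι} {p : ι → Prop}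
    [DecidablePred p] {f g : ι → ℕ} (hf : ∀ i ∈ s, f i ≤ g i + 1)
    (hp : ∀ i ∈ s, ¬p i → f i ≤ g i) :
    ∑ i ∈ s, f i ≤ ∑ i ∈ s, g i + #{i ∈ s | p i} := by
  rw [Finset.card_filter, ← Finset.sum_add_distrib]
  refine Finset.sum_le_sum fun i hi => ?_
  by_cases hpi : p i
  · simpa [hpi] using hf i hi
  · simpa [hpi] using hp i hi hpi

namespace SimpleGraph

variable {V W : Type} (G : SimpleGraph V) (E : Set (Sym2 (V ⊕ W)))

def sumExtend : SimpleGraph (V ⊕ W) :=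
  G.map Function.Embedding.inl ⊔ fromEdgeSet E

@[simp]
theorem sumExtend_adj {a b : V ⊕ W} :
    (G.sumExtend E).Adj a b ↔
      (∃ u v, G.Adj u v ∧ Sum.inl u = a ∧ Sum.inl v = b) ∨ (s(a, b) ∈ E ∧ a ≠ b) := by
  simp [sumExtend]

theorem ncard_neighborSet_sumExtend_inl_le [Finite V] [Finite W] {u : V} {F : Set (V ⊕ W)}
    (hF : {b | s(Sum.inl u, b) ∈ E} ⊆ F) :
    ((G.sumExtend E).neighborSet (Sum.inl u)).ncard ≤ (G.neighborSet u).ncard + F.ncard := by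
  have hsub : (G.sumExtend E).neighborSet (Sum.inl u) ⊆ Sum.inl '' G.neighborSet u ∪ F := by
    intro b hb
    rw [mem_neighborSet, sumExtend_adj] at hb
    rcases hb with ⟨u', v, huv, hu, rfl⟩ | ⟨hb, -⟩
    · cases Sum.inl_injective hu
      exact Or.inl ⟨v, huv, rfl⟩
    · exact Or.inr (hF hb)
  calc _ ≤ (Sum.inl '' G.neighborSet u ∪ F).ncard := Set.ncard_le_ncard hsub
    _ ≤ (Sum.inl '' G.neighborSet u).ncard + F.ncard := Set.ncard_union_le _ _
    _ = (G.neighborSet u).ncard + F.ncard := by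
      rw [Set.ncard_image_of_injective _ Sum.inl_injective]

theorem ncard_neighborSet_sumExtend_inr_le [Finite V] [Finite W] {w : W} {F : Set (V ⊕ W)}
    (hF : {b | s(Sum.inr w, b) ∈ E} ⊆ F) :
    ((G.sumExtend E).neighborSet (Sum.inr w)).ncard ≤ F.ncard := by
  refine Set.ncard_le_ncard ?_
  intro b hb
  rw [mem_neighborSet, sumExtend_adj] at hb
  rcases hb with ⟨u, v, -, hu, -⟩ | ⟨hb, -⟩
  · exact Sum.inl_ne_inr hu |>.elim
  · exact hF hb

theorem sum_ncard_neighborSet_sumExtend_inl_le [Finite V] [Finite W] [DecidableEq V] {y : V}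
    {x : W} (hE : ∀ u b, s(Sum.inl u, b) ∈ E → u = y ∧ b = Sum.inr x) (S : Finset V) :
    ∑ v ∈ S, ((G.sumExtend E).neighborSet (Sum.inl v)).ncard ≤
      ∑ v ∈ S, (G.neighborSet v).ncard + #{v ∈ S | v = y} := by
  refine Finset.sum_le_sum_add_card_filter (fun v _ => ?_) (fun v _ hv => ?_)
  · simpa using G.ncard_neighborSet_sumExtend_inl_le E (F := {Sum.inr x})
      fun b hb => (hE v b hb).2
  · simpa using G.ncard_neighborSet_sumExtend_inl_le E (F := ∅)
      fun b hb => hv (hE v b hb).1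

theorem ncard_edgeSet_sumExtend [Finite V] [Finite W]
    (hE : ∀ e ∈ E, ¬e.IsDiag ∧ ∃ w, Sum.inr w ∈ e) :
    (G.sumExtend E).edgeSet.ncard = G.edgeSet.ncard + E.ncard := by
  have hdiag : E \ Sym2.diagSet = E :=
    Disjoint.sdiff_eq_left <| Set.disjoint_left.mpr fun e he hd => (hE e he).1 hd
  have hdisj : Disjoint (Function.Embedding.inl.sym2Map '' G.edgeSet) E := by
    refine Set.disjoint_left.mpr ?_
    rintro _ ⟨e, -, rfl⟩ he
    obtain ⟨w, hw⟩ := (hE _ he).2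
    obtain ⟨a, -, ha⟩ := Sym2.mem_map.mp hw
    exact Sum.inl_ne_inr ha
  rw [sumExtend, edgeSet_sup, edgeSet_map, edgeSet_fromEdgeSet, hdiag,
    Set.ncard_union_eq hdisj,
    Set.ncard_image_of_injective _ Function.Embedding.inl.sym2Map.injective]

end SimpleGraph

theorem IsTotalDominating.sumExtend {V W : Type} {G : SimpleGraph V} {E : Set (Sym2 (V ⊕ W))}
    {D : Finset V} {R : Finset W} (hD : IsTotalDominating G D)
    (hR : ∀ w, ∃ b ∈ R, (G.sumExtend E).Adj (Sum.inr w) (Sum.inr b)) :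
    IsTotalDominating (G.sumExtend E) (D.disjSum R) := by
  rintro (v | w)
  · obtain ⟨u, hu, hvu⟩ := hD v
    exact ⟨Sum.inl u, Finset.inl_mem_disjSum.mpr hu, by simp [hvu]⟩
  · obtain ⟨b, hb, hwb⟩ := hR w
    exact ⟨Sum.inr b, Finset.inr_mem_disjSum.mpr hb, hwb⟩

-- By definition, `(o1Ext L y).G = L.G.sumExtend (o1Edges y)` and
-- `(o2Ext L y).G = L.G.sumExtend (o2Edges y)`.
def o1Edges {V : Type} (y : V) : Set (Sym2 (V ⊕ Fin 4)) :=
  {s(Sum.inl y, Sum.inr 0), s(Sum.inr 0, Sum.inr 1), s(Sum.inr 1, Sum.inr 2),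
    s(Sum.inr 2, Sum.inr 3)}

def o2Edges {V : Type} (y : V) : Set (Sym2 (V ⊕ Fin 3)) :=
  {s(Sum.inl y, Sum.inr 0), s(Sum.inr 0, Sum.inr 1), s(Sum.inr 1, Sum.inr 2)}

theorem IsTotalDominating.sumExtend_o1Edges {V : Type} {G : SimpleGraph V} (y : V)
    {D : Finset V} {R : Finset (Fin 4)}
    (hD : IsTotalDominating G D) (hR : {1, 2} ⊆ R) :
    IsTotalDominating (G.sumExtend (o1Edges y)) (D.disjSum R) := by
  have h1 : 1 ∈ R := hR (by simp)
  have h2 : 2 ∈ R := hR (by simp)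
  refine hD.sumExtend fun w => ?_
  fin_cases w
  exacts [⟨1, h1, by simp [o1Edges]⟩, ⟨2, h2, by simp [o1Edges]⟩, ⟨1, h1, by simp [o1Edges]⟩,
    ⟨2, h2, by simp [o1Edges]⟩]

theorem IsTotalDominating.sumExtend_o2Edges {V : Type} {G : SimpleGraph V} (y : V)
    {D : Finset V} (hD : IsTotalDominating G D) :
    IsTotalDominating (G.sumExtend (o2Edges y)) (D.disjSum {0, 1}) := by
  refine hD.sumExtend fun w => ?_
  fin_cases w
  exacts [⟨1, by simp, by simp [o2Edges]⟩, ⟨0, by simp, by simp [o2Edges]⟩,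
    ⟨1, by simp, by simp [o2Edges]⟩]

namespace SimpleGraph

variable {V : Type} (G : SimpleGraph V) [Finite V] (y : V)

theorem sum_ncard_neighborSet_sumExtend_o1Edges_inl_le (S : Finset V) :
    ∑ v ∈ S, ((G.sumExtend (o1Edges y)).neighborSet (Sum.inl v)).ncard ≤
      ∑ v ∈ S, (G.neighborSet v).ncard + 1 := by
  classical
  refine (G.sum_ncard_neighborSet_sumExtend_inl_le _ (y := y) (x := 0) ?_ S).trans ?_
  · intro u b hb
    simpa [o1Edges] using hb
  · gcongr
    exact Finset.card_le_one.mpr fun a ha b hb => by simp_all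

theorem ncard_neighborSet_sumExtend_o1Edges_inr_le (i : Fin 4) :
    ((G.sumExtend (o1Edges y)).neighborSet (Sum.inr i)).ncard ≤ if i = 3 then 1 else 2 := by
  refine (G.ncard_neighborSet_sumExtend_inr_le _ subset_rfl).trans ?_
  fin_cases i <;> simp [o1Edges] <;> exact (Set.ncard_insert_le _ {_}).trans (by simp)

theorem ncard_edgeSet_sumExtend_o1Edges :
    (G.sumExtend (o1Edges y)).edgeSet.ncard = G.edgeSet.ncard + 4 := by
  refine (G.ncard_edgeSet_sumExtend _ ?_).trans ?_
  · simp [o1Edges]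
  · rw [o1Edges, Set.ncard_insert_of_notMem, Set.ncard_insert_of_notMem, Set.ncard_pair] <;> simp

theorem sum_ncard_neighborSet_sumExtend_o2Edges_inl_le {S : Finset V} (hy : y ∉ S) :
    ∑ v ∈ S, ((G.sumExtend (o2Edges y)).neighborSet (Sum.inl v)).ncard ≤
      ∑ v ∈ S, (G.neighborSet v).ncard := by
  classical
  refine (G.sum_ncard_neighborSet_sumExtend_inl_le _ (y := y) (x := 0) ?_ S).trans ?_
  · intro u b hb
    simpa [o2Edges] using hb
  · simp [hy]

theorem ncard_neighborSet_sumExtend_o2Edges_inr_le (i : Fin 3) :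
    ((G.sumExtend (o2Edges y)).neighborSet (Sum.inr i)).ncard ≤ if i = 2 then 1 else 2 := by
  refine (G.ncard_neighborSet_sumExtend_inr_le _ subset_rfl).trans ?_
  fin_cases i <;> simp [o2Edges] <;> exact (Set.ncard_insert_le _ {_}).trans (by simp)

theorem ncard_edgeSet_sumExtend_o2Edges :
    (G.sumExtend (o2Edges y)).edgeSet.ncard = G.edgeSet.ncard + 3 := by
  refine (G.ncard_edgeSet_sumExtend _ ?_).trans ?_
  · simp [o2Edges]
  · rw [o2Edges, Set.ncard_insert_of_notMem, Set.ncard_pair] <;> simp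

end SimpleGraph

structure GammaCertificate {V : Type} (G : SimpleGraph V) (sta : V → Status) where
  D : Finset V
  S : Finset V
  isTotalDominating : IsTotalDominating G D
  card_D : D.card = S.card + 1
  sta_ne_B : ∀ v ∈ S, sta v ≠ Status.B
  sum_lt : ∑ v ∈ S, (G.neighborSet v).ncard < G.edgeSet.ncard

namespace GammaCertificate

def ofIso {V₁ V₂ : Type} {G₁ : SimpleGraph V₁} {G₂ : SimpleGraph V₂} {sta₁ : V₁ → Status}
    {sta₂ : V₂ → Status} (c : GammaCertificate G₁ sta₁) (e : G₁ ≃g G₂)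
    (he : ∀ v, sta₂ (e v) = sta₁ v) : GammaCertificate G₂ sta₂ where
  D := c.D.map e.toEquiv.toEmbedding
  S := c.S.map e.toEquiv.toEmbedding
  isTotalDominating := c.isTotalDominating.map_iso e
  card_D := by simp [c.card_D]
  sta_ne_B := by
    simp only [Finset.mem_map, forall_exists_index, and_imp]
    rintro _ u hu rfl
    simpa [he] using c.sta_ne_B u hu
  sum_lt := by simpa [e.ncard_neighborSet, e.ncard_edgeSet] using c.sum_lt

def base : GammaCertificate (V := Fin 6) baseT0.G baseT0.sta where
  D := {1, 2, 3, 4}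
  S := {0, 1, 5}
  isTotalDominating := by unfold IsTotalDominating baseT0; decide
  card_D := rfl
  sta_ne_B := by simp [baseT0]
  sum_lt := by unfold baseT0; simp only [Set.ncard_eq_toFinset_card']; decide

variable {V : Type} [Finite V] {G : SimpleGraph V} {sta : V → Status}

def o1 (c : GammaCertificate G sta) (y : V) :
    GammaCertificate (G.sumExtend (o1Edges y)) (Sum.elim sta ![.B, .B, .A, .C]) where
  D := c.D.disjSum {1, 2}
  S := c.S.disjSum {2, 3}
  isTotalDominating := c.isTotalDominating.sumExtend_o1Edges y subset_rfl
  card_D := by simp [c.card_D]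
  sta_ne_B := by simpa using c.sta_ne_B
  sum_lt := by
    have := G.sum_ncard_neighborSet_sumExtend_o1Edges_inl_le y c.S
    have h2 := G.ncard_neighborSet_sumExtend_o1Edges_inr_le y 2
    have h3 := G.ncard_neighborSet_sumExtend_o1Edges_inr_le y 3
    rw [Finset.sum_disjSum, Finset.sum_pair (by decide), ncard_edgeSet_sumExtend_o1Edges]
    simp only [Fin.reduceEq, if_false, if_true] at h2 h3
    have := c.sum_lt
    omega

def o2 (c : GammaCertificate G sta) {y : V} (hy : sta y = Status.B) :
    GammaCertificate (G.sumExtend (o2Edges y)) (Sum.elim sta ![.B, .A, .C]) where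
  D := c.D.disjSum {0, 1}
  S := c.S.disjSum {1, 2}
  isTotalDominating := c.isTotalDominating.sumExtend_o2Edges y
  card_D := by simp [c.card_D]
  sta_ne_B := by simpa using c.sta_ne_B
  sum_lt := by
    have := G.sum_ncard_neighborSet_sumExtend_o2Edges_inl_le y fun hyS => c.sta_ne_B y hyS hy
    have h1 := G.ncard_neighborSet_sumExtend_o2Edges_inr_le y 1
    have h2 := G.ncard_neighborSet_sumExtend_o2Edges_inr_le y 2
    rw [Finset.sum_disjSum, Finset.sum_pair (by decide), ncard_edgeSet_sumExtend_o2Edges]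
    simp only [Fin.reduceEq, if_false, if_true] at h1 h2
    have := c.sum_lt
    omega

end GammaCertificate

theorem InGamma.finite {L : LGraph} (hL : InGamma L) : Finite L.V := by
  induction hL with
  | base L h =>
    obtain ⟨e, -⟩ := h
    exact Finite.of_equiv (Fin 6) e.toEquiv
  | op1 L y _ _ _ L' h =>
    obtain ⟨e, -⟩ := h
    exact Finite.of_equiv (L.V ⊕ Fin 4) e.toEquiv
  | op2 L y _ _ L' h =>
    obtain ⟨e, -⟩ := h
    exact Finite.of_equiv (L.V ⊕ Fin 3) e.toEquiv

theorem InGamma.nonempty_gammaCertificate {L : LGraph} (hL : InGamma L) :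
    Nonempty (GammaCertificate L.G L.sta) := by
  induction hL with
  | base L h =>
    obtain ⟨e, he⟩ := h
    exact ⟨GammaCertificate.base.ofIso e he⟩
  | op1 L y hL _ _ L' h ih =>
    have := hL.finite
    obtain ⟨c⟩ := ih
    obtain ⟨e, he⟩ := h
    exact ⟨(c.o1 y).ofIso e he⟩
  | op2 L y hL hy L' h ih =>
    have := hL.finite
    obtain ⟨c⟩ := ih
    obtain ⟨e, he⟩ := h
    exact ⟨(c.o2 hy).ofIso e he⟩

section attachVertex

variable {V : Type} {H : SimpleGraph V} {S : Set V}

theorem attachVertex_eq_sumExtend :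
    attachVertex H S = H.sumExtend {e | ∃ u ∈ S, e = s(Sum.inl u, Sum.inr ())} :=
  rfl

theorem IsTotalDominating.attachVertex {D : Finset V} (hD : IsTotalDominating H D)
    (hDS : ∃ a ∈ D, a ∈ S) :
    IsTotalDominating (attachVertex H S) (D.map Function.Embedding.inl) := by
  rw [attachVertex_eq_sumExtend]
  rintro (v | ⟨⟩)
  · obtain ⟨u, hu, hvu⟩ := hD v
    exact ⟨Sum.inl u, Finset.mem_map_of_mem _ hu, by simp [hvu]⟩
  · obtain ⟨a, ha, haS⟩ := hDS
    exact ⟨Sum.inl a, Finset.mem_map_of_mem _ ha, by simp [haS]⟩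

variable [Finite V]

theorem ncard_edgeSet_attachVertex :
    (attachVertex H S).edgeSet.ncard = H.edgeSet.ncard + S.ncard := by
  rw [attachVertex_eq_sumExtend, H.ncard_edgeSet_sumExtend]
  · congr 1
    convert Set.ncard_image_of_injective S (f := fun u => s(Sum.inl u, Sum.inr ())) ?_ using 2
    · ext; simp [eq_comm]
    · intro u v huv
      simpa using huv
  · rintro _ ⟨u, -, rfl⟩
    simp

theorem ncard_neighborSet_attachVertex_inr_le :
    ((attachVertex H S).neighborSet (Sum.inr ())).ncard ≤ S.ncard := by
  rw [attachVertex_eq_sumExtend]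
  refine (H.ncard_neighborSet_sumExtend_inr_le _ (F := Sum.inl '' S) ?_).trans
    (Set.ncard_image_of_injective _ Sum.inl_injective).le
  rintro b ⟨u, hu, hb⟩
  simp_all

theorem sum_ncard_neighborSet_attachVertex_inl_le [DecidablePred (· ∈ S)] (R : Finset V) :
    ∑ a ∈ R, ((attachVertex H S).neighborSet (Sum.inl a)).ncard ≤
      ∑ a ∈ R, (H.neighborSet a).ncard + #{a ∈ R | a ∈ S} := by
  rw [attachVertex_eq_sumExtend]
  refine Finset.sum_le_sum_add_card_filter (fun a _ => ?_) (fun a _ ha => ?_)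
  · simpa using H.ncard_neighborSet_sumExtend_inl_le _ (F := {Sum.inr ()}) (by intro b; simp)
  · simpa using H.ncard_neighborSet_sumExtend_inl_le _ (F := ∅) (by intro b; simp [ha])

theorem totalDominationNumber_attachVertex_le [DecidablePred (· ∈ S)] {D R : Finset V}
    (hD : IsTotalDominating H D) (hDS : ∃ a ∈ D, a ∈ S) (hcard : D.card ≤ R.card + 2)
    (hR : ∑ a ∈ R, (H.neighborSet a).ncard + #{a ∈ R | a ∈ S} ≤ H.edgeSet.ncard) :
    totalDominationNumber (attachVertex H S) ≤ annihilationNumber (attachVertex H S) + 1 := by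
  have hsum : ∑ a ∈ R.disjSum {()}, ((attachVertex H S).neighborSet a).ncard ≤
      (attachVertex H S).edgeSet.ncard := by
    rw [Finset.sum_disjSum, Finset.sum_singleton, ncard_edgeSet_attachVertex]
    have := sum_ncard_neighborSet_attachVertex_inl_le (H := H) (S := S) R
    have := ncard_neighborSet_attachVertex_inr_le (H := H) (S := S)
    omega
  calc totalDominationNumber (attachVertex H S)
      ≤ (D.map Function.Embedding.inl).card := totalDominationNumber_le_card (hD.attachVertex hDS)
    _ ≤ (R.disjSum {()}).card + 1 := by simpa using hcard
    _ ≤ annihilationNumber (attachVertex H S) + 1 := by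
      gcongr
      exact card_le_annihilationNumber hsum

end attachVertex

theorem totalDominationNumber_attachVertex_o1Edges_le {V : Type} [Finite V] {G : SimpleGraph V}
    {sta : V → Status} (c : GammaCertificate G sta) (y : V) {N : Finset (Fin 4)}
    (hN : 2 ≤ N.card) :
    totalDominationNumber (attachVertex (G.sumExtend (o1Edges y)) (Sum.inr '' ↑N)) ≤
      annihilationNumber (attachVertex (G.sumExtend (o1Edges y)) (Sum.inr '' ↑N)) + 1 := by
  classical
  have hS := G.sum_ncard_neighborSet_sumExtend_o1Edges_inl_le y c.S
  have hdeg := G.ncard_neighborSet_sumExtend_o1Edges_inr_le y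
  have hm := G.ncard_edgeSet_sumExtend_o1Edges y
  have hlt := c.sum_lt
  by_cases h12 : 1 ∈ N ∨ 2 ∈ N
  · refine totalDominationNumber_attachVertex_le (D := c.D.disjSum {1, 2}) (R := c.S.disjSum {3})
      (c.isTotalDominating.sumExtend_o1Edges y subset_rfl) ?_ (by simp [c.card_D]) ?_
    · rcases h12 with h | h
      exacts [⟨Sum.inr 1, by simp, by simp [h]⟩, ⟨Sum.inr 2, by simp, by simp [h]⟩]
    · have hfilter : #{a ∈ c.S.disjSum {3} | a ∈ Sum.inr '' (N : Set (Fin 4))} ≤ 1 :=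
        Finset.card_le_one.mpr fun a ha b hb => by simp at ha hb; aesop
      have h3 := hdeg 3
      rw [Finset.sum_disjSum, Finset.sum_singleton]
      simp only [if_true] at h3
      omega
  · have h0 : 0 ∈ N := by
      have : ∀ N : Finset (Fin 4), 2 ≤ N.card → ¬(1 ∈ N ∨ 2 ∈ N) → 0 ∈ N := by decide
      exact this N hN h12
    refine totalDominationNumber_attachVertex_le (D := c.D.disjSum {0, 1, 2})
      (R := c.S.disjSum {1, 3}) (c.isTotalDominating.sumExtend_o1Edges y (by simp))
      ⟨Sum.inr 0, by simp, by simp [h0]⟩ (by simp [c.card_D]) ?_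
    have hfilter : #{a ∈ c.S.disjSum {1, 3} | a ∈ Sum.inr '' (N : Set (Fin 4))} ≤ 1 :=
      Finset.card_le_one.mpr fun a ha b hb => by simp at ha hb; aesop
    have h1 := hdeg 1
    have h3 := hdeg 3
    rw [Finset.sum_disjSum, Finset.sum_pair (by decide)]
    simp only [if_true, Fin.reduceEq, if_false] at h1 h3
    omega

theorem stmt_3_general (T : LGraph) (y : T.V)
    (hT : InGamma T)
    (N : Finset (Fin 4)) (htN : 2 ≤ N.card)
    (G : SimpleGraph ((T.V ⊕ Fin 4) ⊕ Unit))
    (hG : G = attachVertex (o1Ext T y).G (Sum.inr '' (N : Set (Fin 4)))) :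
    totalDominationNumber G ≤ annihilationNumber G + 1 := by
  have := hT.finite
  obtain ⟨c⟩ := hT.nonempty_gammaCertificate
  subst hG
  exact totalDominationNumber_attachVertex_o1Edges_le c y htN

/-- If `G ∈ QT₃`, i.e. `G` is obtained from a tree `T' = o1Ext T y ∈ Γ₁`
(where `T ∈ Γ`, `y` is a leaf of `T` of status `C`, and `x, w, v, z` are the vertices
added in the last step) and a new vertex `h` by adding `t ≥ 2` edges between `h` and
`{x, w, v, z}`, then `γₜ(G) ≤ a(G) + 1`. -/
theorem stmt_3 (T : LGraph) (y : T.V)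
    (hT : InGamma T) (hy : T.sta y = Status.C) (hleaf : (T.G.neighborSet y).ncard = 1)
    (N : Finset (Fin 4)) (htN : 2 ≤ N.card)
    (G : SimpleGraph ((T.V ⊕ Fin 4) ⊕ Unit))
    (hG : G = attachVertex (o1Ext T y).G (Sum.inr '' (N : Set (Fin 4)))) :
    totalDominationNumber G ≤ annihilationNumber G + 1 :=
  stmt_3_general T y hT N htN G hG
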